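/- arXiv:2111.11632 — 4 statements merged into one kernel-verified Lean document; each statement's English description precedes it below -/
import Mathlib

section
/- Let g : ℕ → ℝ be defined by g(1) = 1 and, for every integer x ≥ 2, g(x) = max over integers y with 1 ≤ y ≤ ⌊x/2⌋ of (y + g(y) + g(x − y)). Then for every integer x ≥ 2, g(x) ≤ 3 · x · log₂ x. -/
lemma stmt_0_aux (g : ℕ → ℝ) (h1 : g 1 = 1)
    (hrec : ∀ x : ℕ, ∀ hx : 2 ≤ x,
      g x = (Finset.Icc 1 (x / 2)).sup'
        (Finset.nonempty_Icc.mpr ((Nat.one_le_div_iff two_pos).mpr hx))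
        (fun y => (y : ℝ) + g y + g (x - y))) :
    ∀ x : ℕ, 1 ≤ x → g x ≤ 3 * x * Real.logb 2 x + if x = 1 then 1 else 0 := by
  intro x
  induction x using Nat.strong_induction_on with
  | _ x ih =>
    intro hx1
    rcases eq_or_lt_of_le hx1 with h | hx2
    · rw [← h]; simp [h1]
    · have hx2 : 2 ≤ x := hx2
      have hne : x ≠ 1 := by omega
      rw [hrec x hx2]
      simp only [hne, if_false, add_zero]
      apply Finset.sup'_le
      intro y hy
      obtain ⟨hy1, hy2⟩ := Finset.mem_Icc.mp hy
      have h2y : 2 * y ≤ x := by omega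
      have hyx : y < x := by omega
      have hxy1 : 1 ≤ x - y := by omega
      have hxyx : x - y < x := by omega
      have hg1 : g y ≤ 3 * y * Real.logb 2 y + 1 := by
        refine (ih y hyx hy1).trans ?_
        gcongr
        split <;> norm_num
      have hg2 : g (x - y) ≤ 3 * ((x : ℝ) - y) * Real.logb 2 ((x : ℝ) - y) + 1 := by
        have hc : ((x - y : ℕ) : ℝ) = (x : ℝ) - y := by
          push_cast [Nat.cast_sub hyx.le]; ring
        have := ih (x - y) hxyx hxy1
        rw [hc] at this
        refine this.trans ?_
        gcongr
        split <;> norm_num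
      have hA1 : (1 : ℝ) ≤ (y : ℝ) := by exact_mod_cast hy1
      have hAB : 2 * (y : ℝ) ≤ (x : ℝ) := by exact_mod_cast h2y
      have hLA : Real.logb 2 y + 1 ≤ Real.logb 2 x := by
        have h2 : Real.logb 2 (2 * y) = 1 + Real.logb 2 y := by
          rw [Real.logb_mul (by norm_num) (by positivity), Real.logb_self_eq_one] <;> norm_num
        have hmono : Real.logb 2 (2 * y) ≤ Real.logb 2 x :=
          Real.logb_le_logb_of_le (by norm_num) (by positivity) hAB
        linarith
      have hLxy : Real.logb 2 ((x : ℝ) - y) ≤ Real.logb 2 x :=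
        Real.logb_le_logb_of_le (by norm_num) (by linarith) (by linarith)
      nlinarith [mul_nonneg (by linarith : (0:ℝ) ≤ 3 * (y:ℝ))
          (by linarith : (0:ℝ) ≤ Real.logb 2 x - 1 - Real.logb 2 y),
        mul_nonneg (by linarith : (0:ℝ) ≤ 3 * ((x:ℝ) - y))
          (by linarith : (0:ℝ) ≤ Real.logb 2 x - Real.logb 2 ((x:ℝ) - y))]

/-- If `g : ℕ → ℝ` satisfies `g 1 = 1` and, for every integer `x ≥ 2`,
`g x = max_{1 ≤ y ≤ ⌊x/2⌋} (y + g y + g (x - y))`, then for every `x ≥ 2`,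
`g x ≤ 3 · x · log₂ x`. -/
theorem stmt_0 (g : ℕ → ℝ) (h1 : g 1 = 1)
    (hrec : ∀ x : ℕ, ∀ hx : 2 ≤ x,
      g x = (Finset.Icc 1 (x / 2)).sup'
        (Finset.nonempty_Icc.mpr ((Nat.one_le_div_iff two_pos).mpr hx))
        (fun y => (y : ℝ) + g y + g (x - y))) :
    ∀ x : ℕ, 2 ≤ x → g x ≤ 3 * x * Real.logb 2 x := by
  intro x hx
  have := stmt_0_aux g h1 hrec x (by omega)
  simpa [show x ≠ 1 by omega] using this
end

section
/- Let f : ℕ → ℝ satisfy f(1) = 1 and, for every integer x ≥ 2, there exist integers y, z with 1 ≤ z ≤ y, y + z = x, and f(x) = f(y) + f(z) + z. Then for every integer x ≥ 2, f(x) ≤ 3 · x · log₂ x. -/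
/-- If `f : ℕ → ℝ` satisfies `f 1 = 1` and, for every `x ≥ 2`, there exist
integers `y, z` with `1 ≤ z ≤ y`, `y + z = x`, and `f x = f y + f z + z`, then for every
`x ≥ 2`, `f x ≤ 3 · x · log₂ x`. -/
theorem stmt_2 (f : ℕ → ℝ) (hf1 : f 1 = 1)
    (hfrec : ∀ x : ℕ, 2 ≤ x →
      ∃ y z : ℕ, 1 ≤ z ∧ z ≤ y ∧ y + z = x ∧ f x = f y + f z + z) :
    ∀ x : ℕ, 2 ≤ x → f x ≤ 3 * x * Real.logb 2 x := by
  intro x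
  induction x using Nat.strong_induction_on with
  | _ x ih =>
    intro hx
    obtain ⟨y, z, hz1, hzy, hyzx, hfx⟩ := hfrec x hx
    have hy1 : 1 ≤ y := le_trans hz1 hzy
    have hxR : (2:ℝ) ≤ (x:ℝ) := by exact_mod_cast hx
    have hlogx1 : 1 ≤ Real.logb 2 x := by
      have := Real.logb_self_eq_one (b := 2) (by norm_num : (1:ℝ) < 2)
      calc (1:ℝ) = Real.logb 2 2 := this.symm
        _ ≤ Real.logb 2 x := Real.logb_le_logb_of_le (by norm_num) (by norm_num) hxR
    by_cases hy2 : y = 1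
    · -- then z = 1, x = 2
      have hz : z = 1 := le_antisymm (hy2 ▸ hzy) hz1
      have hx2 : x = 2 := by omega
      subst hx2; subst hz; subst hy2
      rw [hfx, hf1]
      have : Real.logb 2 2 = 1 := Real.logb_self_eq_one (by norm_num)
      push_cast
      rw [this]; norm_num
    · have hy2' : 2 ≤ y := by omega
      have hyx : y < x := by omega
      have hfy : f y ≤ 3 * y * Real.logb 2 y := ih y hyx hy2'
      have hlogy : Real.logb 2 y ≤ Real.logb 2 x :=
        Real.logb_le_logb_of_le (by norm_num) (by exact_mod_cast hy1) (by exact_mod_cast le_of_lt hyx)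
      have hyR : (1:ℝ) ≤ (y:ℝ) := by exact_mod_cast hy1
      by_cases hz2 : z = 1
      · subst hz2
        rw [hfx, hf1]
        have hyx' : (y:ℝ) + 1 = x := by exact_mod_cast hyzx
        push_cast
        nlinarith [hfy, hlogy, hlogx1, hyR]
      · have hz2' : 2 ≤ z := by omega
        have hzx : z < x := by omega
        have hfz : f z ≤ 3 * z * Real.logb 2 z := ih z hzx hz2'
        have hzR : (2:ℝ) ≤ (z:ℝ) := by exact_mod_cast hz2'
        have h2z : 2 * (z:ℝ) ≤ x := by
          have : 2 * z ≤ x := by omega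
          exact_mod_cast this
        have hlogz : Real.logb 2 z ≤ Real.logb 2 x - 1 := by
          have h1 : Real.logb 2 z ≤ Real.logb 2 ((x:ℝ) / 2) :=
            Real.logb_le_logb_of_le (by norm_num) (by linarith) (by linarith)
          have h2 : Real.logb 2 ((x:ℝ) / 2) = Real.logb 2 x - 1 := by
            rw [Real.logb_div (by linarith) (by norm_num),
              Real.logb_self_eq_one (by norm_num)]
          linarith [h1, h2.le]
        have hxyz : (y:ℝ) + z = x := by exact_mod_cast hyzx
        rw [hfx]
        nlinarith [hfy, hfz, hlogy, hlogz, hzR, hyR, hlogx1]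
end

section
/- Consider full binary trees (each node is a leaf or has exactly two children). For a tree t, let leaves(t) be its number of leaves, and define cost recursively by cost(leaf) = 1 and cost(node l r) = cost(l) + cost(r) + leaves(r). Call t ordered if for every internal node, the left subtree has at least as many leaves as the right subtree. Then for every ordered full binary tree t with leaves(t) = n ≥ 2, cost(t) ≤ 3 · n · log₂ n. -/
/-- Full binary trees: each node is a leaf or has exactly two children. -/
inductive FullBTree : Type
  | leaf : FullBTree
  | node : FullBTree → FullBTree → FullBTree

namespace FullBTree

/-- Number of leaves of a full binary tree. -/
def leaves : FullBTree → ℕ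
  | leaf => 1
  | node l r => leaves l + leaves r

/-- `cost(leaf) = 1` and `cost(node l r) = cost(l) + cost(r) + leaves(r)`. -/
def cost : FullBTree → ℕ
  | leaf => 1
  | node l r => cost l + cost r + leaves r

/-- A tree is ordered if at every internal node the left subtree has at least as many
leaves as the right subtree. -/
def Ordered : FullBTree → Prop
  | leaf => True
  | node l r => leaves r ≤ leaves l ∧ Ordered l ∧ Ordered r

end FullBTree

/- The induction `cost t ≤ n (1 + log₂ n)` goes through because the re-evaluation charge `z` at a
node is paid for by the smaller side: `z + z log₂ z = z log₂ (2z) ≤ z log₂ (y + z)` when `z ≤ y`.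
For `n ≥ 2` we have `1 ≤ log₂ n`, so `n (1 + log₂ n) ≤ 2 n log₂ n`. -/

open Real

lemma mul_logb_two_add_mul_logb_two_add_le {y z : ℝ} (hz : 0 < z) (hzy : z ≤ y) :
    y * logb 2 y + z * logb 2 z + z ≤ (y + z) * logb 2 (y + z) := by
  have hy_le : logb 2 y ≤ logb 2 (y + z) :=
    logb_le_logb_of_le one_lt_two (by linarith) (by linarith)
  have hz_le : logb 2 (2 * z) ≤ logb 2 (y + z) :=
    logb_le_logb_of_le one_lt_two (by linarith) (by linarith)
  have h2z : logb 2 (2 * z) = 1 + logb 2 z := by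
    rw [logb_mul two_ne_zero hz.ne', logb_self_eq_one one_lt_two]
  calc y * logb 2 y + z * logb 2 z + z = y * logb 2 y + z * logb 2 (2 * z) := by
        rw [h2z]; ring
    _ ≤ y * logb 2 (y + z) + z * logb 2 (y + z) := by gcongr; linarith
    _ = (y + z) * logb 2 (y + z) := by ring

namespace FullBTree

lemma one_le_leaves : ∀ t : FullBTree, 1 ≤ t.leaves
  | leaf => le_rfl
  | node l _ => (one_le_leaves l).trans (Nat.le_add_right _ _)

lemma cost_le_leaves_mul_one_add_logb {t : FullBTree} (ht : t.Ordered) :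
    (t.cost : ℝ) ≤ t.leaves * (1 + logb 2 t.leaves) := by
  induction t with
  | leaf => simp [cost, leaves]
  | node l r ihl ihr =>
    obtain ⟨hrl, hl, hr⟩ := ht
    have hr_pos : (0 : ℝ) < r.leaves := by exact_mod_cast r.one_le_leaves
    have hrl' : (r.leaves : ℝ) ≤ l.leaves := by exact_mod_cast hrl
    have hsplit := mul_logb_two_add_mul_logb_two_add_le hr_pos hrl'
    simp only [cost, leaves, Nat.cast_add]
    nlinarith [ihl hl, ihr hr]

end FullBTree

/-- every ordered full binary tree `t` with `leaves t = n ≥ 2` satisfies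
`cost t ≤ 3 · n · log₂ n`. -/
theorem stmt_8 (t : FullBTree) (ht : t.Ordered) (n : ℕ) (hn : t.leaves = n) (h2 : 2 ≤ n) :
    (t.cost : ℝ) ≤ 3 * n * Real.logb 2 n := by
  have hcost := FullBTree.cost_le_leaves_mul_one_add_logb ht
  rw [hn] at hcost
  have hn2 : (2 : ℝ) ≤ n := by exact_mod_cast h2
  have hlog : 1 ≤ logb 2 (n : ℝ) := by
    simpa using logb_le_logb_of_le one_lt_two two_pos hn2
  nlinarith
end

section
/- Consider full binary trees (each node is a leaf or has exactly two children), with leaves(t) the number of leaves, cost defined by cost(leaf) = 1 and cost(node l r) = cost(l) + cost(r) + leaves(r), and reorder defined by reorder(leaf) = leaf and reorder(node l r) = node (reorder l) (reorder r) if leaves(l) ≥ leaves(r), else node (reorder r) (reorder l). Then for every full binary tree t with leaves(t) = n ≥ 2, cost(reorder t) ≤ 3 · n · log₂ n. -/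
namespace FullBTree

/-- `reorder` swaps children so that the child with more leaves comes first. -/
def reorder : FullBTree → FullBTree
  | leaf => leaf
  | node l r =>
      if leaves r ≤ leaves l then node (reorder l) (reorder r)
      else node (reorder r) (reorder l)

end FullBTree

namespace FullBTree

lemma leaves_pos (t : FullBTree) : 1 ≤ t.leaves := by
  induction t with
  | leaf => simp [leaves]
  | node l r hl hr => simp [leaves]; omega

lemma leaves_reorder (t : FullBTree) : t.reorder.leaves = t.leaves := by
  induction t with
  | leaf => rfl
  | node l r hl hr =>
    rw [reorder]
    split <;> simp [leaves, hl, hr] <;> omega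

lemma cost_reorder_one (t : FullBTree) (h : t.leaves = 1) : t.reorder.cost = 1 := by
  cases t with
  | leaf => rfl
  | node l r =>
    exfalso
    have := l.leaves_pos
    have := r.leaves_pos
    simp [leaves] at h
    omega

lemma node_bound (l r : FullBTree) (hlr : r.leaves ≤ l.leaves)
    (IHl : 2 ≤ l.leaves → (l.reorder.cost : ℝ) ≤ 3 * l.leaves * Real.logb 2 l.leaves)
    (IHr : 2 ≤ r.leaves → (r.reorder.cost : ℝ) ≤ 3 * r.leaves * Real.logb 2 r.leaves) :
    ((FullBTree.node l.reorder r.reorder).cost : ℝ) ≤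
      3 * (l.leaves + r.leaves : ℕ) * Real.logb 2 ((l.leaves + r.leaves : ℕ)) := by
  have ha1 := l.leaves_pos
  have hb1 := r.leaves_pos
  set a := l.leaves with hA
  set b := r.leaves with hB
  have hcost : ((FullBTree.node l.reorder r.reorder).cost : ℝ)
      = (l.reorder.cost : ℝ) + r.reorder.cost + b := by
    simp only [cost, leaves_reorder]
    push_cast
    ring
  rw [hcost]
  have hnpos : (0:ℝ) < ((a + b : ℕ) : ℝ) := by positivity
  rcases Nat.lt_or_ge b 2 with hb | hb
  · -- b = 1
    have hb1' : b = 1 := by omega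
    have hcr : r.reorder.cost = 1 := r.cost_reorder_one hb1'
    rcases Nat.lt_or_ge a 2 with ha | ha
    · -- a = 1, n = 2
      have ha1' : a = 1 := by omega
      have hcl : l.reorder.cost = 1 := l.cost_reorder_one ha1'
      rw [hcl, hcr, ha1', hb1']
      norm_num [Real.logb_self_eq_one]
    · -- a ≥ 2
      have hIl := IHl ha
      have h1 : Real.logb 2 a ≤ Real.logb 2 ((a + b : ℕ)) := by
        apply Real.logb_le_logb_of_le (by norm_num) (by positivity)
        exact_mod_cast Nat.le_add_right a b
      have h2 : (1:ℝ) ≤ Real.logb 2 ((a + b : ℕ)) := by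
        have : Real.logb 2 2 ≤ Real.logb 2 ((a + b : ℕ)) := by
          apply Real.logb_le_logb_of_le (by norm_num) (by norm_num)
          exact_mod_cast (by omega : 2 ≤ a + b)
        simpa [Real.logb_self_eq_one] using this
      rw [hcr]
      have hbR : (b:ℝ) = 1 := by exact_mod_cast hb1'
      push_cast at h1 h2 hIl ⊢
      nlinarith [mul_le_mul_of_nonneg_left h1 (by positivity : (0:ℝ) ≤ 3 * (a:ℝ)), hbR]
  · -- b ≥ 2, hence a ≥ 2
    have ha : 2 ≤ a := le_trans hb hlr
    have hIl := IHl ha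
    have hIr := IHr hb
    have h1 : Real.logb 2 a ≤ Real.logb 2 ((a + b : ℕ)) := by
      apply Real.logb_le_logb_of_le (by norm_num) (by positivity)
      exact_mod_cast Nat.le_add_right a b
    have h2 : Real.logb 2 b + 1 ≤ Real.logb 2 ((a + b : ℕ)) := by
      have hle : Real.logb 2 (2 * (b:ℝ)) ≤ Real.logb 2 ((a + b : ℕ)) := by
        apply Real.logb_le_logb_of_le (by norm_num) (by positivity)
        push_cast
        nlinarith [(show (b:ℝ) ≤ a from by exact_mod_cast hlr)]
      have heq : Real.logb 2 (2 * (b:ℝ)) = 1 + Real.logb 2 b := by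
        rw [Real.logb_mul (by norm_num) (by positivity)]
        simp [Real.logb_self_eq_one]
      rw [heq] at hle
      linarith
    push_cast at h1 h2 hIl hIr ⊢
    nlinarith [mul_le_mul_of_nonneg_left h1 (by positivity : (0:ℝ) ≤ 3 * (a:ℝ)),
      mul_le_mul_of_nonneg_left h2 (by positivity : (0:ℝ) ≤ 3 * (b:ℝ))]

lemma key (t : FullBTree) : 2 ≤ t.leaves →
    (t.reorder.cost : ℝ) ≤ 3 * t.leaves * Real.logb 2 t.leaves := by
  induction t with
  | leaf => intro h; simp [leaves] at h
  | node l r hl hr =>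
    intro _
    rw [reorder]
    split
    · next h =>
      exact node_bound l r h hl hr
    · next h =>
      have := node_bound r l (le_of_lt (lt_of_not_ge h)) hr hl
      have hcomm : r.leaves + l.leaves = l.leaves + r.leaves := Nat.add_comm _ _
      simpa [leaves, hcomm] using this

end FullBTree

/-- for every full binary tree `t` with `leaves t = n ≥ 2`,
`cost (reorder t) ≤ 3 · n · log₂ n`. -/
theorem stmt_10 (t : FullBTree) (n : ℕ) (hn : t.leaves = n) (h2 : 2 ≤ n) :
    (t.reorder.cost : ℝ) ≤ 3 * n * Real.logb 2 n := by
  subst hn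
  exact t.key h2
end
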